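/- arXiv:1906.02176 — 2 statements merged into one kernel-verified Lean document; each statement's English description precedes it below -/
import Mathlib

section
/- (Adjoint of the restricted solution map, 1D form.) Let a < b, ε > 0, and σ : [a,b] → ℝ continuous. Let u, h, g̃ : [a,b] × [−1,1] → ℝ be continuous, with u and h continuously differentiable in x with jointly continuous x-derivatives, and suppose: (i) v ∂ₓu(x,v) = (σ(x)/ε)(Lu)(x,v) for all (x,v); (ii) −v ∂ₓh(x,v) − (σ(x)/ε)(Lh)(x,v) = g̃(x,v) for all (x,v); (iii) h(a,v) = 0 for v ∈ (−1,0) and h(b,v) = 0 for v ∈ (0,1) (h vanishes on the outflow boundary Γ₊). Then ∫_a^b ∫_{−1}^{1} g̃(x,v) u(x,v) dv dx = ∫_0^1 v u(a,v) h(a,v) dv + ∫_{−1}^0 |v| u(b,v) h(b,v) dv. -/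
/-!
Multiplying the adjoint equation by `u` and the forward equation by `h` and adding, the
scattering terms combine to `(σ/ε)(h · L u - L h · u)`, whose `v`-integral vanishes because
`L` is symmetric on `L²(-1, 1)`. What is left is `g̃ u = -v ∂ₓ(h u)`; integrating in `x` first
(Fubini) gives the boundary flux `-∫ v (h u)(b, v) - v (h u)(a, v) dv`, and since `h` vanishes
on the outflow boundary only the inflow halves survive.
-/

open Set intervalIntegral
open MeasureTheory (volume)

lemma intervalIntegral_intervalIntegral_swap_of_continuousOn {E : Type*} [NormedAddCommGroup E]
    [NormedSpace ℝ E] {F : ℝ → ℝ → E} {a b c d : ℝ}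
    (hF : ContinuousOn F.uncurry (uIcc a b ×ˢ uIcc c d)) :
    ∫ x in a..b, ∫ y in c..d, F x y = ∫ y in c..d, ∫ x in a..b, F x y :=
  MeasureTheory.intervalIntegral_intervalIntegral_swap <|
    (hF.integrableOn_compact (isCompact_uIcc.prod isCompact_uIcc)).mono_set
      (prod_mono uIoc_subset_uIcc uIoc_subset_uIcc)

noncomputable def scattering (w : ℝ → ℝ) (v : ℝ) : ℝ :=
  (1 / 2) * (∫ v' in (-1 : ℝ)..1, w v') - w v

lemma continuousOn_scattering {w : ℝ → ℝ} {s : Set ℝ} (hw : ContinuousOn w s) :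
    ContinuousOn (scattering w) s :=
  continuousOn_const.sub hw

lemma integral_scattering_mul_comm {f g : ℝ → ℝ} (hf : ContinuousOn f (Icc (-1) 1))
    (hg : ContinuousOn g (Icc (-1) 1)) :
    ∫ v in (-1 : ℝ)..1, scattering f v * g v = ∫ v in (-1 : ℝ)..1, f v * scattering g v := by
  have hfg : IntervalIntegrable (fun v => f v * g v) volume (-1) 1 :=
    (hf.mul hg).intervalIntegrable_of_Icc (by norm_num)
  simp only [scattering, sub_mul, mul_sub]
  rw [integral_sub ((hg.intervalIntegrable_of_Icc (by norm_num)).const_mul _) hfg,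
    integral_sub ((hf.intervalIntegrable_of_Icc (by norm_num)).mul_const _) hfg,
    integral_const_mul, integral_mul_const]
  ring

lemma integral_source_mul_eq_neg_integral_flux {U H U' H' G : ℝ → ℝ} {κ : ℝ}
    (hU : ContinuousOn U (Icc (-1) 1)) (hH : ContinuousOn H (Icc (-1) 1))
    (hU' : ContinuousOn U' (Icc (-1) 1)) (hH' : ContinuousOn H' (Icc (-1) 1))
    (hU_eq : ∀ v ∈ Icc (-1 : ℝ) 1, v * U' v = κ * scattering U v)
    (hH_eq : ∀ v ∈ Icc (-1 : ℝ) 1, -v * H' v - κ * scattering H v = G v) :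
    ∫ v in (-1 : ℝ)..1, G v * U v = -∫ v in (-1 : ℝ)..1, v * (H' v * U v + H v * U' v) := by
  have hpointwise : EqOn (fun v => G v * U v)
      (fun v => κ * (H v * scattering U v - scattering H v * U v)
        - v * (H' v * U v + H v * U' v)) (Ioo (-1) 1) := fun v hv => by
    linear_combination (-U v) * hH_eq v (Ioo_subset_Icc_self hv)
      + H v * hU_eq v (Ioo_subset_Icc_self hv)
  have hHLU : IntervalIntegrable (fun v => H v * scattering U v) volume (-1) 1 :=
    (hH.mul (continuousOn_scattering hU)).intervalIntegrable_of_Icc (by norm_num)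
  have hLHU : IntervalIntegrable (fun v => scattering H v * U v) volume (-1) 1 :=
    ((continuousOn_scattering hH).mul hU).intervalIntegrable_of_Icc (by norm_num)
  have hflux : IntervalIntegrable (fun v => v * (H' v * U v + H v * U' v)) volume (-1) 1 :=
    (continuousOn_id.mul ((hH'.mul hU).add (hH.mul hU'))).intervalIntegrable_of_Icc
      (by norm_num)
  rw [integral_congr_Ioo_of_le (by norm_num) hpointwise,
    integral_sub ((hHLU.sub hLHU).const_mul _) hflux, integral_const_mul,
    integral_sub hHLU hLHU, integral_scattering_mul_comm hH hU, sub_self, mul_zero, zero_sub]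

lemma neg_integral_boundary_flux {ua ha ub hb : ℝ → ℝ}
    (hF : ContinuousOn (fun v => v * (hb v * ub v - ha v * ua v)) (Icc (-1) 1))
    (ha_out : ∀ v ∈ Ioo (-1 : ℝ) 0, ha v = 0) (hb_out : ∀ v ∈ Ioo (0 : ℝ) 1, hb v = 0) :
    -∫ v in (-1 : ℝ)..1, v * (hb v * ub v - ha v * ua v)
      = (∫ v in (0 : ℝ)..1, v * ua v * ha v) + ∫ v in (-1 : ℝ)..0, |v| * ub v * hb v := by
  have h0 : (0 : ℝ) ∈ uIcc (-1) 1 := by rw [uIcc_of_le (by norm_num)]; norm_num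
  have hFi := hF.intervalIntegrable_of_Icc (μ := volume) (by norm_num)
  rw [← integral_add_adjacent_intervals (hFi.mono_set (uIcc_subset_uIcc_left h0))
      (hFi.mono_set (uIcc_subset_uIcc_right h0)),
    neg_add, ← integral_neg, ← integral_neg, add_comm]
  congr 1
  · refine integral_congr_Ioo_of_le zero_le_one fun v hv => ?_
    simp only [hb_out v hv]
    ring
  · refine integral_congr_Ioo_of_le (by norm_num) fun v hv => ?_
    simp only [ha_out v hv, abs_of_neg hv.2]
    ring

theorem rte_adjoint_solution_map_general (a b ε : ℝ) (hab : a < b)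
    (σ : ℝ → ℝ)
    (u h gtil ud hd : ℝ → ℝ → ℝ)
    (hu_cont : ContinuousOn (fun q : ℝ × ℝ => u q.1 q.2)
      (Set.Icc a b ×ˢ Set.Icc (-1 : ℝ) 1))
    (hh_cont : ContinuousOn (fun q : ℝ × ℝ => h q.1 q.2)
      (Set.Icc a b ×ˢ Set.Icc (-1 : ℝ) 1))
    (hud : ∀ x ∈ Set.Icc a b, ∀ v ∈ Set.Icc (-1 : ℝ) 1,
      HasDerivWithinAt (fun x' => u x' v) (ud x v) (Set.Icc a b) x)
    (hhd : ∀ x ∈ Set.Icc a b, ∀ v ∈ Set.Icc (-1 : ℝ) 1,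
      HasDerivWithinAt (fun x' => h x' v) (hd x v) (Set.Icc a b) x)
    (hud_cont : ContinuousOn (fun q : ℝ × ℝ => ud q.1 q.2)
      (Set.Icc a b ×ˢ Set.Icc (-1 : ℝ) 1))
    (hhd_cont : ContinuousOn (fun q : ℝ × ℝ => hd q.1 q.2)
      (Set.Icc a b ×ˢ Set.Icc (-1 : ℝ) 1))
    (hpde_u : ∀ x ∈ Set.Icc a b, ∀ v ∈ Set.Icc (-1 : ℝ) 1,
      v * ud x v = (σ x / ε) * (((1 / 2) * ∫ v' in (-1 : ℝ)..1, u x v') - u x v))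
    (hpde_h : ∀ x ∈ Set.Icc a b, ∀ v ∈ Set.Icc (-1 : ℝ) 1,
      -v * hd x v - (σ x / ε) * (((1 / 2) * ∫ v' in (-1 : ℝ)..1, h x v') - h x v)
        = gtil x v)
    (hout_a : ∀ v ∈ Set.Ioo (-1 : ℝ) 0, h a v = 0)
    (hout_b : ∀ v ∈ Set.Ioo (0 : ℝ) 1, h b v = 0) :
    ∫ x in a..b, ∫ v in (-1 : ℝ)..1, gtil x v * u x v
      = (∫ v in (0 : ℝ)..1, v * u a v * h a v)
        + ∫ v in (-1 : ℝ)..0, |v| * u b v * h b v := by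
  have hx : uIcc a b = Icc a b := uIcc_of_le hab.le
  have hv : uIcc (-1 : ℝ) 1 = Icc (-1) 1 := uIcc_of_le (by norm_num)
  have ha : a ∈ Icc a b := left_mem_Icc.2 hab.le
  have hb : b ∈ Icc a b := right_mem_Icc.2 hab.le
  have hflux : ContinuousOn
      (fun q : ℝ × ℝ => q.2 * (hd q.1 q.2 * u q.1 q.2 + h q.1 q.2 * ud q.1 q.2))
      (uIcc a b ×ˢ uIcc (-1) 1) :=
    hx ▸ hv ▸ continuousOn_snd.mul ((hhd_cont.mul hu_cont).add (hh_cont.mul hud_cont))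
  calc ∫ x in a..b, ∫ v in (-1 : ℝ)..1, gtil x v * u x v
      = ∫ x in a..b, -∫ v in (-1 : ℝ)..1, v * (hd x v * u x v + h x v * ud x v) :=
        integral_congr fun x hxab => by
          rw [hx] at hxab
          exact integral_source_mul_eq_neg_integral_flux (hu_cont.uncurry_left x hxab)
            (hh_cont.uncurry_left x hxab) (hud_cont.uncurry_left x hxab)
            (hhd_cont.uncurry_left x hxab) (hpde_u x hxab) (hpde_h x hxab)
    _ = -∫ v in (-1 : ℝ)..1, ∫ x in a..b, v * (hd x v * u x v + h x v * ud x v) := by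
        rw [integral_neg, intervalIntegral_intervalIntegral_swap_of_continuousOn
          (F := fun x v => v * (hd x v * u x v + h x v * ud x v)) hflux]
    _ = -∫ v in (-1 : ℝ)..1, v * (h b v * u b v - h a v * u a v) := by
        refine congrArg _ (integral_congr fun v hv1 => ?_)
        rw [hv] at hv1
        rw [integral_const_mul, integral_deriv_mul_eq_sub_of_hasDerivWithinAt
          (hx ▸ fun x hxab => hhd x hxab v hv1) (hx ▸ fun x hxab => hud x hxab v hv1)
          (hx ▸ hhd_cont.uncurry_right v hv1).intervalIntegrable
          (hx ▸ hud_cont.uncurry_right v hv1).intervalIntegrable]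
    _ = _ := by
        refine neg_integral_boundary_flux (continuousOn_id.mul ?_) hout_a hout_b
        exact ((hh_cont.uncurry_left b hb).mul (hu_cont.uncurry_left b hb)).sub
          ((hh_cont.uncurry_left a ha).mul (hu_cont.uncurry_left a ha))

/-- Adjoint of the restricted solution map, 1D form (Theorem 3.3 of the paper).
If `u` solves the forward RTE `v ∂ₓu = (σ/ε) L u` on `[a,b] × [−1,1]`, and `h` solves the
adjoint RTE with source `g̃`, i.e. `−v ∂ₓh − (σ/ε) L h = g̃`, with `h` vanishing on the
outflow boundary (`h(a,v) = 0` for `v ∈ (−1,0)` and `h(b,v) = 0` for `v ∈ (0,1)`), then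
`∫∫ g̃ u = ∫₀¹ v u(a,v) h(a,v) dv + ∫_{−1}^0 |v| u(b,v) h(b,v) dv`. -/
theorem rte_adjoint_solution_map (a b ε : ℝ) (hab : a < b) (hε : 0 < ε)
    (σ : ℝ → ℝ) (hσ : ContinuousOn σ (Set.Icc a b))
    (u h gtil ud hd : ℝ → ℝ → ℝ)
    (hu_cont : ContinuousOn (fun q : ℝ × ℝ => u q.1 q.2)
      (Set.Icc a b ×ˢ Set.Icc (-1 : ℝ) 1))
    (hh_cont : ContinuousOn (fun q : ℝ × ℝ => h q.1 q.2)
      (Set.Icc a b ×ˢ Set.Icc (-1 : ℝ) 1))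
    (hgtil_cont : ContinuousOn (fun q : ℝ × ℝ => gtil q.1 q.2)
      (Set.Icc a b ×ˢ Set.Icc (-1 : ℝ) 1))
    (hud : ∀ x ∈ Set.Icc a b, ∀ v ∈ Set.Icc (-1 : ℝ) 1,
      HasDerivWithinAt (fun x' => u x' v) (ud x v) (Set.Icc a b) x)
    (hhd : ∀ x ∈ Set.Icc a b, ∀ v ∈ Set.Icc (-1 : ℝ) 1,
      HasDerivWithinAt (fun x' => h x' v) (hd x v) (Set.Icc a b) x)
    (hud_cont : ContinuousOn (fun q : ℝ × ℝ => ud q.1 q.2)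
      (Set.Icc a b ×ˢ Set.Icc (-1 : ℝ) 1))
    (hhd_cont : ContinuousOn (fun q : ℝ × ℝ => hd q.1 q.2)
      (Set.Icc a b ×ˢ Set.Icc (-1 : ℝ) 1))
    (hpde_u : ∀ x ∈ Set.Icc a b, ∀ v ∈ Set.Icc (-1 : ℝ) 1,
      v * ud x v = (σ x / ε) * (((1 / 2) * ∫ v' in (-1 : ℝ)..1, u x v') - u x v))
    (hpde_h : ∀ x ∈ Set.Icc a b, ∀ v ∈ Set.Icc (-1 : ℝ) 1,
      -v * hd x v - (σ x / ε) * (((1 / 2) * ∫ v' in (-1 : ℝ)..1, h x v') - h x v)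
        = gtil x v)
    (hout_a : ∀ v ∈ Set.Ioo (-1 : ℝ) 0, h a v = 0)
    (hout_b : ∀ v ∈ Set.Ioo (0 : ℝ) 1, h b v = 0) :
    ∫ x in a..b, ∫ v in (-1 : ℝ)..1, gtil x v * u x v
      = (∫ v in (0 : ℝ)..1, v * u a v * h a v)
        + ∫ v in (-1 : ℝ)..0, |v| * u b v * h b v :=
  rte_adjoint_solution_map_general a b ε hab σ u h gtil ud hd hu_cont hh_cont hud hhd hud_cont
    hhd_cont hpde_u hpde_h hout_a hout_b
end

section
/- (Outflow–inflow contraction for the 1D RTE.) Let a < b, ε > 0, σ : [a,b] → ℝ continuous with σ(x) ≥ 0, and let u : [a,b] × [−1,1] → ℝ be continuous, continuously differentiable in x with jointly continuous x-derivative, satisfying v ∂ₓu(x,v) = (σ(x)/ε)(Lu)(x,v) for all (x,v), where (Lw)(x,v) = (1/2)∫_{−1}^{1} w(x,v′) dv′ − w(x,v). Then the outflow boundary energy is bounded by the inflow boundary energy: ∫_0^1 v u(b,v)² dv + ∫_{−1}^0 |v| u(a,v)² dv ≤ ∫_0^1 v u(a,v)² dv + ∫_{−1}^0 |v| u(b,v)²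 dv. -/
open MeasureTheory Set intervalIntegral

/-!
Write `E(x) = ∫_{-1}^{1} v u(x,v)² dv` for the net flux of energy through the point `x`.
By the fundamental theorem of calculus in `x` and Fubini,
`E(b) - E(a) = ∫_a^b ∫_{-1}^{1} 2 u (v ∂ₓu) dv dx`, and the equation turns the inner
integral into `(σ/ε) ∫ 2 u (Lu) dv = (σ/ε) ((∫ u)² - 2 ∫ u²)`, which is `≤ 0` by
Cauchy–Schwarz.
Hence `E(b) ≤ E(a)`, and splitting both sides at `v = 0` gives the claim.
-/

theorem intervalIntegral.integral_eq_sub_of_hasDerivWithinAt_Icc {E : Type*}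
    [NormedAddCommGroup E] [NormedSpace ℝ E] [CompleteSpace E] {f f' : ℝ → E} {a b : ℝ}
    (hab : a ≤ b) (hf : ∀ x ∈ Icc a b, HasDerivWithinAt f (f' x) (Icc a b) x)
    (hf' : IntervalIntegrable f' volume a b) :
    ∫ x in a..b, f' x = f b - f a :=
  integral_eq_sub_of_hasDerivAt_of_le hab (fun x hx => (hf x hx).continuousWithinAt)
    (fun x hx => (hf x (Ioo_subset_Icc_self hx)).hasDerivAt (Icc_mem_nhds hx.1 hx.2)) hf'

theorem intervalIntegral.integral_sub_eq_integral_integral_of_hasDerivWithinAt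
    {F F' : ℝ → ℝ → ℝ} {a b c d : ℝ} (hab : a ≤ b) (hcd : c ≤ d)
    (hF : ∀ x ∈ Icc a b, ∀ y ∈ Icc c d, HasDerivWithinAt (F · y) (F' x y) (Icc a b) x)
    (hF' : ContinuousOn F'.uncurry (Icc a b ×ˢ Icc c d)) :
    ∫ y in c..d, (F b y - F a y) = ∫ x in a..b, ∫ y in c..d, F' x y := by
  have hint : IntegrableOn F'.uncurry (uIoc a b ×ˢ uIoc c d) := by
    rw [uIoc_of_le hab, uIoc_of_le hcd]
    exact (hF'.integrableOn_compact (isCompact_Icc.prod isCompact_Icc)).mono_set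
      (prod_mono Ioc_subset_Icc_self Ioc_subset_Icc_self)
  rw [intervalIntegral_intervalIntegral_swap hint]
  refine integral_congr fun y hy => ?_
  rw [uIcc_of_le hcd] at hy
  have hF'_slice : ContinuousOn (F' · y) (Icc a b) :=
    hF'.comp (by fun_prop) fun x hx => mk_mem_prod hx hy
  exact (integral_eq_sub_of_hasDerivWithinAt_Icc hab (fun x hx => hF x hx y hy)
    (hF'_slice.intervalIntegrable_of_Icc hab)).symm

theorem intervalIntegral.sq_integral_le_mul_integral_sq {f : ℝ → ℝ} {a b : ℝ}
    (hab : a ≤ b) (hf : IntervalIntegrable f volume a b)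
    (hf2 : IntervalIntegrable (fun x => f x ^ 2) volume a b) :
    (∫ x in a..b, f x) ^ 2 ≤ (b - a) * ∫ x in a..b, f x ^ 2 := by
  rcases hab.eq_or_lt with rfl | hlt
  · simp
  set I := ∫ x in a..b, f x
  set m := I / (b - a)
  have hvar : 0 ≤ ∫ x in a..b, (f x - m) ^ 2 := integral_nonneg hab fun _ _ => sq_nonneg _
  have hexpand : ∫ x in a..b, (f x - m) ^ 2 = (∫ x in a..b, f x ^ 2) - I ^ 2 / (b - a) := by
    have hsq : ∀ x, (f x - m) ^ 2 = (f x ^ 2 - 2 * m * f x) + m ^ 2 := fun x => by ring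
    simp_rw [hsq]
    rw [integral_add (hf2.sub (hf.const_mul _)) intervalIntegrable_const,
      integral_sub hf2 (hf.const_mul _), integral_const_mul, integral_const, smul_eq_mul]
    simp only [m, I]
    field_simp
    ring
  have hpos : 0 < b - a := sub_pos.2 hlt
  rw [hexpand, sub_nonneg, div_le_iff₀ hpos] at hvar
  linarith

theorem intervalIntegral.integral_mul_average_sub_nonpos {w : ℝ → ℝ} {c d : ℝ} (hcd : c < d)
    (hw : ContinuousOn w (Icc c d)) :
    ∫ v in c..d, w v * ((d - c)⁻¹ * (∫ v' in c..d, w v') - w v) ≤ 0 := by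
  set I := ∫ v' in c..d, w v'
  have hw1 : IntervalIntegrable w volume c d := hw.intervalIntegrable_of_Icc hcd.le
  have hw2 : IntervalIntegrable (fun v => w v ^ 2) volume c d :=
    (hw.pow 2).intervalIntegrable_of_Icc hcd.le
  have hexpand : ∫ v in c..d, w v * ((d - c)⁻¹ * I - w v)
      = (d - c)⁻¹ * I ^ 2 - ∫ v in c..d, w v ^ 2 := by
    have hmul : ∀ v, w v * ((d - c)⁻¹ * I - w v) = (d - c)⁻¹ * I * w v - w v ^ 2 :=
      fun v => by ring
    simp_rw [hmul]
    rw [integral_sub (hw1.const_mul _) hw2, integral_const_mul]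
    ring
  rw [hexpand, sub_nonpos, inv_mul_le_iff₀ (sub_pos.2 hcd)]
  exact sq_integral_le_mul_integral_sq hcd.le hw1 hw2

theorem intervalIntegral.integral_two_mul_mul_nonpos_of_eq_scattering {w w' : ℝ → ℝ} {c : ℝ}
    (hc : 0 ≤ c) (hw : ContinuousOn w (Icc (-1) 1))
    (hw' : ∀ v ∈ Icc (-1 : ℝ) 1,
      v * w' v = c * ((1 / 2) * (∫ v' in (-1 : ℝ)..1, w v') - w v)) :
    ∫ v in (-1 : ℝ)..1, 2 * w v * (v * w' v) ≤ 0 := by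
  have hscatter := integral_mul_average_sub_nonpos (by norm_num) hw
  rw [show ((1 : ℝ) - -1)⁻¹ = 1 / 2 by norm_num] at hscatter
  calc ∫ v in (-1 : ℝ)..1, 2 * w v * (v * w' v)
      = ∫ v in (-1 : ℝ)..1, 2 * c * (w v * ((1 / 2) * (∫ v' in (-1 : ℝ)..1, w v') - w v)) :=
        integral_congr fun v hv => by
          rw [uIcc_of_le (by norm_num)] at hv
          rw [hw' v hv]
          ring
    _ ≤ 0 := by
        rw [integral_const_mul]
        exact mul_nonpos_of_nonneg_of_nonpos (by positivity) hscatter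

theorem intervalIntegral.integral_mul_eq_integral_sub_integral_abs_mul {g : ℝ → ℝ} {c d : ℝ}
    (hc : c ≤ 0) (hd : 0 ≤ d) (hg : IntervalIntegrable (fun v => v * g v) volume c d) :
    ∫ v in c..d, v * g v = (∫ v in (0 : ℝ)..d, v * g v) - ∫ v in c..0, |v| * g v := by
  have habs : ∫ v in c..0, |v| * g v = -∫ v in c..0, v * g v := by
    rw [← integral_neg]
    refine integral_congr fun v hv => ?_
    rw [uIcc_of_le hc] at hv
    simp only [abs_of_nonpos hv.2, neg_mul]
  rw [habs, sub_neg_eq_add, add_comm, integral_add_adjacent_intervals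
    (hg.mono_set (uIcc_subset_uIcc_left (by simp [uIcc_of_le (hc.trans hd), hc, hd])))
    (hg.mono_set (uIcc_subset_uIcc_right (by simp [uIcc_of_le (hc.trans hd), hc, hd])))]

theorem rte_outflow_inflow_contraction_general (a b ε : ℝ) (hab : a < b) (hε : 0 < ε)
    (σ : ℝ → ℝ)
    (hσ_nonneg : ∀ x ∈ Set.Icc a b, 0 ≤ σ x)
    (u ud : ℝ → ℝ → ℝ)
    (hu_cont : ContinuousOn (fun q : ℝ × ℝ => u q.1 q.2)
      (Set.Icc a b ×ˢ Set.Icc (-1 : ℝ) 1))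
    (hud : ∀ x ∈ Set.Icc a b, ∀ v ∈ Set.Icc (-1 : ℝ) 1,
      HasDerivWithinAt (fun x' => u x' v) (ud x v) (Set.Icc a b) x)
    (hud_cont : ContinuousOn (fun q : ℝ × ℝ => ud q.1 q.2)
      (Set.Icc a b ×ˢ Set.Icc (-1 : ℝ) 1))
    (hpde : ∀ x ∈ Set.Icc a b, ∀ v ∈ Set.Icc (-1 : ℝ) 1,
      v * ud x v = (σ x / ε) * (((1 / 2) * ∫ v' in (-1 : ℝ)..1, u x v') - u x v)) :
    (∫ v in (0 : ℝ)..1, v * u b v ^ 2) + (∫ v in (-1 : ℝ)..0, |v| * u a v ^ 2)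
      ≤ (∫ v in (0 : ℝ)..1, v * u a v ^ 2) + ∫ v in (-1 : ℝ)..0, |v| * u b v ^ 2 := by
  have hV : (-1 : ℝ) ≤ 1 := by norm_num
  have hu_slice : ∀ x ∈ Icc a b, ContinuousOn (u x) (Icc (-1) 1) := fun x hx =>
    hu_cont.comp (by fun_prop) fun v hv => mk_mem_prod hx hv
  have hweighted : ∀ x ∈ Icc a b, IntervalIntegrable (fun v => v * u x v ^ 2) volume (-1) 1 :=
    fun x hx => (continuousOn_id.mul ((hu_slice x hx).pow 2)).intervalIntegrable_of_Icc hV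
  have hflux := integral_sub_eq_integral_integral_of_hasDerivWithinAt hab.le hV
    (F := fun x v => v * u x v ^ 2) (F' := fun x v => 2 * u x v * (v * ud x v))
    (fun x hx v hv => ((hud x hx v hv).fun_pow 2).const_mul v |>.congr_deriv (by ring))
    (by fun_prop (disch := assumption))
  have hdissip : ∀ x ∈ Icc a b, ∫ v in (-1 : ℝ)..1, 2 * u x v * (v * ud x v) ≤ 0 :=
    fun x hx => integral_two_mul_mul_nonpos_of_eq_scattering
      (div_nonneg (hσ_nonneg x hx) hε.le) (hu_slice x hx) (hpde x hx)
  have henergy :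
      ∫ v in (-1 : ℝ)..1, v * u b v ^ 2 ≤ ∫ v in (-1 : ℝ)..1, v * u a v ^ 2 := by
    have hloss := integral_nonneg (μ := volume) hab.le fun x hx => neg_nonneg.2 (hdissip x hx)
    rw [intervalIntegral.integral_neg, ← hflux, intervalIntegral.integral_sub
      (hweighted b (right_mem_Icc.2 hab.le)) (hweighted a (left_mem_Icc.2 hab.le))] at hloss
    linarith
  rw [integral_mul_eq_integral_sub_integral_abs_mul (by norm_num) zero_le_one
      (hweighted a (left_mem_Icc.2 hab.le)),
    integral_mul_eq_integral_sub_integral_abs_mul (by norm_num) zero_le_one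
      (hweighted b (right_mem_Icc.2 hab.le))] at henergy
  linarith

/-- Outflow–inflow contraction for the 1D RTE: if `u` solves `v ∂ₓu = (σ(x)/ε) L u`
on `[a,b] × [−1,1]` with `σ ≥ 0`, then the outflow boundary energy is bounded by the
inflow boundary energy:
`∫₀¹ v u(b,v)² dv + ∫_{−1}^0 |v| u(a,v)² dv ≤ ∫₀¹ v u(a,v)² dv + ∫_{−1}^0 |v| u(b,v)² dv`. -/
theorem rte_outflow_inflow_contraction (a b ε : ℝ) (hab : a < b) (hε : 0 < ε)
    (σ : ℝ → ℝ) (hσ_cont : ContinuousOn σ (Set.Icc a b))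
    (hσ_nonneg : ∀ x ∈ Set.Icc a b, 0 ≤ σ x)
    (u ud : ℝ → ℝ → ℝ)
    (hu_cont : ContinuousOn (fun q : ℝ × ℝ => u q.1 q.2)
      (Set.Icc a b ×ˢ Set.Icc (-1 : ℝ) 1))
    (hud : ∀ x ∈ Set.Icc a b, ∀ v ∈ Set.Icc (-1 : ℝ) 1,
      HasDerivWithinAt (fun x' => u x' v) (ud x v) (Set.Icc a b) x)
    (hud_cont : ContinuousOn (fun q : ℝ × ℝ => ud q.1 q.2)
      (Set.Icc a b ×ˢ Set.Icc (-1 : ℝ) 1))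
    (hpde : ∀ x ∈ Set.Icc a b, ∀ v ∈ Set.Icc (-1 : ℝ) 1,
      v * ud x v = (σ x / ε) * (((1 / 2) * ∫ v' in (-1 : ℝ)..1, u x v') - u x v)) :
    (∫ v in (0 : ℝ)..1, v * u b v ^ 2) + (∫ v in (-1 : ℝ)..0, |v| * u a v ^ 2)
      ≤ (∫ v in (0 : ℝ)..1, v * u a v ^ 2) + ∫ v in (-1 : ℝ)..0, |v| * u b v ^ 2 :=
  rte_outflow_inflow_contraction_general a b ε hab hε σ hσ_nonneg u ud hu_cont hud hud_cont hpde
end
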